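/- Let μ = Σ_{i=1}^m λ_i δ_{u_i} (λ_i > 0) be a discrete measure on S^{n-1} whose support is not contained in any closed hemisphere, and suppose μ({u₁}) > 0. If φ : (0,∞) → (0,∞) is continuous, strictly increasing with φ(t) → ∞ as t → ∞, then sup{ ∫_{S^{n-1}} φ(h_L) dμ : L a convex body with origin interior and |L°| = ω_n } = ∞. -/

import Mathlib

open MeasureTheory Metric Filter Set ENNReal

noncomputable section

abbrev E (n : ℕ) := EuclideanSpace ℝ (Fin n)

abbrev Sph (n : ℕ) := ↥(Metric.sphere (0 : E n) 1)

/-- Convex body in `ℝⁿ` with the origin in its interior. -/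
def IsBody {n : ℕ} (K : Set (E n)) : Prop :=
  IsCompact K ∧ Convex ℝ K ∧ 0 ∈ interior K

/-- Support function of a set. -/
def supportFn {n : ℕ} (K : Set (E n)) (u : E n) : ℝ :=
  sSup ((fun x => (inner ℝ x u : ℝ)) '' K)

/-- Polar body. -/
def polarBody {n : ℕ} (K : Set (E n)) : Set (E n) :=
  {y | ∀ x ∈ K, (inner ℝ x y : ℝ) ≤ 1}

/-- Radial function. -/
def radialFn {n : ℕ} (K : Set (E n)) (u : E n) : ℝ :=
  sSup {r : ℝ | 0 ≤ r ∧ r • u ∈ K}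

/-- Volume of the unit ball in `ℝⁿ`. -/
def unitBallVol (n : ℕ) : ℝ≥0∞ := volume (Metric.closedBall (0 : E n) 1)

/-! Take `K = conv(B ∪ {R u₁})`. Its polar is the unit ball cut by the half-space
`⟪R u₁, y⟫ ≤ 1`, which still contains the ball of radius `1/2` centred at `-u₁/2`; so
`2⁻ⁿ ω_n ≤ |K°| ≤ ω_n`, and the dilate `L = c K` with `|L°| = ω_n` has `c ≥ 1/2`, whence
`h_L(u₁) ≥ R/2`. Every `h_L(u_i) ≥ c > 0`, so all atoms contribute positively, and the atom at
`u₁` alone exceeds any bound once `R` is large, since `φ → ∞`. -/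

open Pointwise
open scoped RealInnerProductSpace

section

variable {n : ℕ}

lemma polarBody_union (s t : Set (E n)) :
    polarBody (s ∪ t) = polarBody s ∩ polarBody t := by
  ext y
  simp only [polarBody, mem_union, mem_inter_iff, mem_ofPred_eq, or_imp, forall_and]

lemma polarBody_singleton (p : E n) : polarBody {p} = {y | ⟪p, y⟫ ≤ 1} := by
  ext y
  simp [polarBody]

lemma polarBody_closedBall_one : polarBody (closedBall (0 : E n) 1) = closedBall 0 1 := by
  ext y
  simp only [polarBody, mem_ofPred_eq, mem_closedBall_zero_iff]
  refine ⟨fun hy => ?_, fun hy x hx => ?_⟩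
  · rcases eq_or_ne y 0 with rfl | hy0
    · simp
    have hy0' : ‖y‖ ≠ 0 := norm_ne_zero_iff.mpr hy0
    have h := hy (‖y‖⁻¹ • y) (by rw [norm_smul, norm_inv, norm_norm, inv_mul_cancel₀ hy0'])
    rwa [real_inner_smul_left, real_inner_self_eq_norm_sq, sq, inv_mul_cancel_left₀ hy0'] at h
  · calc ⟪x, y⟫ ≤ ‖x‖ * ‖y‖ := real_inner_le_norm x y
      _ ≤ 1 := mul_le_one₀ hx (norm_nonneg y) hy

lemma polarBody_closure_convexHull (s : Set (E n)) :
    polarBody (closure (convexHull ℝ s)) = polarBody s := by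
  refine Subset.antisymm (fun y hy x hx => hy x (subset_closure (subset_convexHull ℝ s hx)))
    fun y hy => ?_
  have hconv : Convex ℝ {x : E n | ⟪x, y⟫ ≤ 1} :=
    convex_halfSpace_le ⟨fun a b => inner_add_left a b y, fun c a => real_inner_smul_left a y c⟩ 1
  have hclosed : IsClosed {x : E n | ⟪x, y⟫ ≤ 1} := isClosed_le (by fun_prop) continuous_const
  exact closure_minimal (convexHull_min hy hconv) hclosed

lemma polarBody_smul {c : ℝ} (hc : c ≠ 0) (s : Set (E n)) :
    polarBody (c • s) = c⁻¹ • polarBody s := by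
  ext y
  rw [mem_inv_smul_set_iff₀ hc]
  simp only [polarBody, mem_ofPred_eq, ← image_smul, forall_mem_image, real_inner_smul_left,
    real_inner_smul_right]


lemma volume_polarBody_smul {c : ℝ} (hc : 0 < c) (s : Set (E n)) :
    volume (polarBody (c • s)) = ENNReal.ofReal (c ^ n)⁻¹ * volume (polarBody s) := by
  rw [polarBody_smul hc.ne', Measure.addHaar_smul, finrank_euclideanSpace_fin, inv_pow,
    abs_of_pos (by positivity)]

lemma exists_smul_volume_polarBody_eq {s : Set (E n)} {V : ℝ≥0∞} {a : ℝ} (hn : n ≠ 0)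
    (ha : 0 < a) (hV₀ : V ≠ 0) (hV : V ≠ ∞)
    (hlow : ENNReal.ofReal (a ^ n) * V ≤ volume (polarBody s))
    (hfin : volume (polarBody s) ≠ ∞) :
    ∃ c, a ≤ c ∧ volume (polarBody (c • s)) = V := by
  set v := volume (polarBody s)
  have hVpos : 0 < V.toReal := ENNReal.toReal_pos hV₀ hV
  have hlow' : a ^ n * V.toReal ≤ v.toReal := by
    simpa [ENNReal.toReal_mul, ENNReal.toReal_ofReal (pow_nonneg ha.le n)] using
      ENNReal.toReal_mono hfin hlow
  have hvpos : 0 < v.toReal := (by positivity : 0 < a ^ n * V.toReal).trans_le hlow'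
  have hr : 0 < v.toReal / V.toReal := div_pos hvpos hVpos
  have hpow : ((v.toReal / V.toReal) ^ (n : ℝ)⁻¹) ^ n = v.toReal / V.toReal :=
    Real.rpow_inv_natCast_pow hr.le hn
  refine ⟨(v.toReal / V.toReal) ^ (n : ℝ)⁻¹, ?_, ?_⟩
  · rw [← pow_le_pow_iff_left₀ ha.le (by positivity) hn, hpow, le_div_iff₀ hVpos]
    exact hlow'
  · rw [volume_polarBody_smul (by positivity), hpow, inv_div, ENNReal.ofReal_div_of_pos hvpos,
      ENNReal.ofReal_toReal hV, ENNReal.ofReal_toReal hfin,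
      ENNReal.div_mul_cancel (ENNReal.toReal_pos_iff.mp hvpos).1.ne' hfin]

lemma IsBody.smul {K : Set (E n)} (hK : IsBody K) {c : ℝ} (hc : c ≠ 0) : IsBody (c • K) := by
  refine ⟨hK.1.smul c, hK.2.1.smul c, ?_⟩
  rw [interior_smul₀ hc, ← smul_zero c]
  exact smul_mem_smul_set hK.2.2

lemma inner_le_supportFn {K : Set (E n)} (hK : IsCompact K) {x : E n} (hx : x ∈ K) (w : E n) :
    ⟪x, w⟫ ≤ supportFn K w :=
  le_csSup (hK.image (by fun_prop)).bddAbove (mem_image_of_mem _ hx)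

lemma mul_inner_le_supportFn_smul {K : Set (E n)} (hK : IsCompact K) {x : E n} (hx : x ∈ K)
    (c : ℝ) (w : E n) : c * ⟪x, w⟫ ≤ supportFn (c • K) w := by
  rw [← real_inner_smul_left]
  exact inner_le_supportFn (hK.smul c) (smul_mem_smul_set hx) w

def iceCreamCone (p : E n) : Set (E n) := closure (convexHull ℝ (closedBall 0 1 ∪ {p}))

lemma closedBall_subset_iceCreamCone (p : E n) : closedBall 0 1 ⊆ iceCreamCone p :=
  subset_union_left.trans ((subset_convexHull ℝ _).trans subset_closure)

lemma mem_iceCreamCone (p : E n) : p ∈ iceCreamCone p :=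
  subset_closure (subset_convexHull ℝ _ (mem_union_right _ rfl))

lemma isBody_iceCreamCone (p : E n) : IsBody (iceCreamCone p) := by
  refine ⟨?_, (convex_convexHull ℝ _).closure, ?_⟩
  · refine isCompact_of_isClosed_isBounded isClosed_closure (Bornology.IsBounded.closure ?_)
    exact isBounded_convexHull.mpr (isBounded_closedBall.union Bornology.isBounded_singleton)
  · exact interior_mono (closedBall_subset_iceCreamCone p)
      (interior_closedBall (0 : E n) one_ne_zero ▸ mem_ball_self one_pos)

lemma polarBody_iceCreamCone (p : E n) :
    polarBody (iceCreamCone p) = closedBall 0 1 ∩ {y | ⟪p, y⟫ ≤ 1} := by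
  rw [iceCreamCone, polarBody_closure_convexHull, polarBody_union, polarBody_closedBall_one,
    polarBody_singleton]

lemma volume_polarBody_iceCreamCone_le (p : E n) :
    volume (polarBody (iceCreamCone p)) ≤ unitBallVol n := by
  rw [polarBody_iceCreamCone]
  exact measure_mono inter_subset_left

lemma closedBall_half_subset_polarBody_iceCreamCone {u : E n} (hu : ‖u‖ = 1) {R : ℝ}
    (hR : 0 ≤ R) : closedBall (-((2 : ℝ)⁻¹ • u)) 2⁻¹ ⊆ polarBody (iceCreamCone (R • u)) := by
  intro y hy
  rw [polarBody_iceCreamCone]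
  have hnorm : ‖(2 : ℝ)⁻¹ • u‖ = 2⁻¹ := by simp [norm_smul, hu]
  refine ⟨closedBall_subset_closedBall' (by simp [hnorm]; norm_num) hy, ?_⟩
  rw [mem_closedBall, dist_eq_norm, sub_neg_eq_add] at hy
  have hinner : ⟪u, y + (2 : ℝ)⁻¹ • u⟫ ≤ 2⁻¹ :=
    (real_inner_le_norm _ _).trans (by rw [hu, one_mul]; exact hy)
  rw [inner_add_right, real_inner_smul_right, real_inner_self_eq_norm_sq, hu] at hinner
  rw [mem_ofPred_eq, real_inner_smul_left]
  nlinarith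

lemma volume_polarBody_iceCreamCone_ge {u : E n} (hu : ‖u‖ = 1) {R : ℝ} (hR : 0 ≤ R) :
    ENNReal.ofReal ((2 : ℝ)⁻¹ ^ n) * unitBallVol n ≤ volume (polarBody (iceCreamCone (R • u))) := by
  calc ENNReal.ofReal ((2 : ℝ)⁻¹ ^ n) * unitBallVol n
      = volume (closedBall (-((2 : ℝ)⁻¹ • u)) 2⁻¹) := by
        rw [Measure.addHaar_closedBall' volume _ (by norm_num), finrank_euclideanSpace_fin]
        rfl
    _ ≤ _ := measure_mono (closedBall_half_subset_polarBody_iceCreamCone hu hR)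

end

lemma integral_sum_ofReal_smul_dirac {α ι : Type*} [MeasurableSpace α] [MeasurableSingletonClass α]
    [Fintype ι] (x : ι → α) {c : ι → ℝ} (hc : ∀ i, 0 ≤ c i) (f : α → ℝ) :
    ∫ a, f a ∂(∑ i, ENNReal.ofReal (c i) • Measure.dirac (x i)) = ∑ i, c i * f (x i) := by
  rw [integral_finsetSum_measure fun i _ =>
    (integrable_dirac enorm_lt_top).smul_measure ENNReal.ofReal_ne_top]
  refine Finset.sum_congr rfl fun i _ => ?_
  rw [integral_smul_measure, integral_dirac, ENNReal.toReal_ofReal (hc i), smul_eq_mul]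

theorem discrete_sup_infinite_increasing_general {n m : ℕ} (hm : 0 < m)
    (u : Fin m → Sph n) (lam : Fin m → ℝ) (hlam : ∀ i, 0 < lam i)
    (μ : Measure (Sph n))
    (hμ : μ = ∑ i : Fin m, ENNReal.ofReal (lam i) • Measure.dirac (u i))
    (φ : ℝ → ℝ)
    (hφpos : ∀ t ∈ Ioi (0 : ℝ), 0 < φ t)
    (hφtop : Tendsto φ atTop atTop) :
    ∀ C : ℝ, ∃ L : Set (E n), IsBody L ∧ volume (polarBody L) = unitBallVol n ∧
      C < ∫ w : Sph n, φ (supportFn L (w : E n)) ∂μ := by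
  intro C
  let i₀ : Fin m := ⟨0, hm⟩
  have hu : ∀ i, ‖(u i : E n)‖ = 1 := fun i => mem_sphere_zero_iff_norm.mp (u i).2
  have hn : n ≠ 0 := by
    rintro rfl
    simpa [Subsingleton.elim (u i₀ : E 0) 0] using hu i₀
  obtain ⟨t₀, ht₀⟩ :=
    eventually_atTop.mp ((hφtop.const_mul_atTop (hlam i₀)).eventually_gt_atTop C)
  set R := 2 * max t₀ 0
  have hR : 0 ≤ R := by positivity
  set K := iceCreamCone (R • (u i₀ : E n))
  have hK : IsBody K := isBody_iceCreamCone _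
  obtain ⟨c, hc, hvol⟩ := exists_smul_volume_polarBody_eq hn (by norm_num)
    (measure_closedBall_pos volume 0 one_pos).ne' measure_closedBall_lt_top.ne
    (volume_polarBody_iceCreamCone_ge (hu i₀) hR)
    (ne_top_of_le_ne_top measure_closedBall_lt_top.ne (volume_polarBody_iceCreamCone_le _))
  have hc₀ : 0 < c := lt_of_lt_of_le (by norm_num) hc
  have hsupp : ∀ i, c ≤ supportFn (c • K) (u i) := fun i => by
    have h := mul_inner_le_supportFn_smul hK.1
      (closedBall_subset_iceCreamCone _ (mem_closedBall_zero_iff.mpr (hu i).le)) c (u i)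
    rwa [real_inner_self_eq_norm_sq, hu i, one_pow, mul_one] at h
  have hsupp₀ : t₀ ≤ supportFn (c • K) (u i₀) := by
    have h := mul_inner_le_supportFn_smul hK.1 (mem_iceCreamCone _) c (u i₀)
    rw [real_inner_smul_left, real_inner_self_eq_norm_sq, hu i₀, one_pow, mul_one] at h
    nlinarith [le_max_left t₀ 0]
  refine ⟨c • K, hK.smul hc₀.ne', hvol, ?_⟩
  rw [hμ, integral_sum_ofReal_smul_dirac _ (fun i => (hlam i).le)]
  calc C < lam i₀ * φ (supportFn (c • K) (u i₀)) := ht₀ _ hsupp₀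
    _ ≤ ∑ i, lam i * φ (supportFn (c • K) (u i)) :=
      Finset.single_le_sum (fun i _ => (mul_pos (hlam i) (hφpos _ (hc₀.trans_le (hsupp i)))).le)
        (Finset.mem_univ i₀)

theorem discrete_sup_infinite_increasing {n m : ℕ} (hm : 0 < m)
    (u : Fin m → Sph n) (lam : Fin m → ℝ) (hlam : ∀ i, 0 < lam i)
    (hhemi : ∀ v : Sph n, ∃ i, 0 < (inner ℝ (u i : E n) (v : E n) : ℝ))
    (μ : Measure (Sph n))
    (hμ : μ = ∑ i : Fin m, ENNReal.ofReal (lam i) • Measure.dirac (u i))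
    (φ : ℝ → ℝ) (hφc : ContinuousOn φ (Ioi 0)) (hφmono : StrictMonoOn φ (Ioi 0))
    (hφpos : ∀ t ∈ Ioi (0 : ℝ), 0 < φ t)
    (hφtop : Tendsto φ atTop atTop) :
    ∀ C : ℝ, ∃ L : Set (E n), IsBody L ∧ volume (polarBody L) = unitBallVol n ∧
      C < ∫ w : Sph n, φ (supportFn L (w : E n)) ∂μ :=
  discrete_sup_infinite_increasing_general hm u lam hlam μ hμ φ hφpos hφtop
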